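/- Let Q_{s,t,v,w} be the convex quadrilateral with vertices (0,0), (0,1), (s,t), (v,w), where s,t,v > 0, t ≥ w, and Q_{s,t,v,w} is not a trapezoid, and let E₀ be a non-circular ellipse inscribed in Q_{s,t,v,w}, corresponding to parameter r ∈ (0,1). Then, identifying points of ℝ² with complex numbers, the two foci of E₀ are exactly the roots of the quadratic polynomial p(z) = z² + ((−sv + ((N−s)r − vt)i)/τ)·z + rs(−w + vi)/τ, where N = vt − ws and τ = (s−v)r + v. -/
import Mathlib


open Set

noncomputable section

/-- Points of the ellipse with foci `f₁`, `f₂` and major-axis length `2*a`. -/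
def EllipseSet (f₁ f₂ : ℂ) (a : ℝ) : Set ℂ := {z : ℂ | dist z f₁ + dist z f₂ = 2 * a}

/-- `E` is the (possibly circular) ellipse with foci `f₁, f₂` and semi-major axis `a`.
It is a circle precisely when `f₁ = f₂`. -/
def IsEllipse (E : Set ℂ) (f₁ f₂ : ℂ) (a : ℝ) : Prop :=
  dist f₁ f₂ < 2 * a ∧ E = EllipseSet f₁ f₂ a

/-- The full line through `P` and `Q`. -/
def LineThrough (P Q : ℂ) : Set ℂ := {z : ℂ | ∃ θ : ℝ, z = P + θ • (Q - P)}

/-- `E` is tangent to the side `[P,Q]` at `ζ`: the line through `P` and `Q` meets `E`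
in the single point `ζ`, which lies on the closed segment `[P,Q]`. -/
def TangentToSideAt (E : Set ℂ) (P Q ζ : ℂ) : Prop :=
  ζ ∈ segment ℝ P Q ∧ E ∩ LineThrough P Q = {ζ}

/-- `E` is tangent to the side `[P,Q]`. -/
def TangentToSide (E : Set ℂ) (P Q : ℂ) : Prop := ∃ ζ, TangentToSideAt E P Q ζ

/-- A curve `E` is inscribed in the quadrilateral `A₁A₂A₃A₄` (vertices in order)
if it is tangent to each of the four sides. -/
def InscribedInQuad (E : Set ℂ) (A₁ A₂ A₃ A₄ : ℂ) : Prop :=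
  TangentToSide E A₁ A₂ ∧ TangentToSide E A₂ A₃ ∧
    TangentToSide E A₃ A₄ ∧ TangentToSide E A₄ A₁

/-- `A₁A₂A₃A₄` is a convex quadrilateral with the vertices listed in cyclic order:
the four points are in convex position and the diagonals `A₁A₃`, `A₂A₄` meet. -/
def IsConvexQuad (A₁ A₂ A₃ A₄ : ℂ) : Prop :=
  A₁ ∉ convexHull ℝ ({A₂, A₃, A₄} : Set ℂ) ∧
  A₂ ∉ convexHull ℝ ({A₁, A₃, A₄} : Set ℂ) ∧
  A₃ ∉ convexHull ℝ ({A₁, A₂, A₄} : Set ℂ) ∧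
  A₄ ∉ convexHull ℝ ({A₁, A₂, A₃} : Set ℂ) ∧
  (segment ℝ A₁ A₃ ∩ segment ℝ A₂ A₄).Nonempty

def IsParallelogram (A₁ A₂ A₃ A₄ : ℂ) : Prop := A₁ + A₃ = A₂ + A₄

/-- The diagonals `A₁A₃` and `A₂A₄` are perpendicular. -/
def Orthodiagonal (A₁ A₂ A₃ A₄ : ℂ) : Prop :=
  (A₃ - A₁).re * (A₄ - A₂).re + (A₃ - A₁).im * (A₄ - A₂).im = 0

/-- `P` is equidistant from the four points (the circumcenter, when they are concyclic). -/
def IsCircCenter (P A₁ A₂ A₃ A₄ : ℂ) : Prop :=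
  dist P A₁ = dist P A₂ ∧ dist P A₂ = dist P A₃ ∧ dist P A₃ = dist P A₄

/-- `P` is the intersection point of the diagonals `A₁A₃` and `A₂A₄`. -/
def IsDiagPoint (P A₁ A₂ A₃ A₄ : ℂ) : Prop :=
  P ∈ segment ℝ A₁ A₃ ∧ P ∈ segment ℝ A₂ A₄

/-- The plane vectors `z` and `w` are parallel. -/
def Para (z w : ℂ) : Prop := z.re * w.im = z.im * w.re

/-- The quadrilateral `A₁A₂A₃A₄` has (at least) one pair of parallel opposite sides. -/
def IsTrapezoid (A₁ A₂ A₃ A₄ : ℂ) : Prop :=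
  Para (A₂ - A₁) (A₄ - A₃) ∨ Para (A₃ - A₂) (A₁ - A₄)

/-- The quadratic polynomial `ψ_r(x,y)` whose zero set is the inscribed ellipse of
`Q_{s,t,v,w}` with parameter `r`; here `N = vt − ws`. -/
def psi (s t v w r x y : ℝ) : ℝ :=
  (((w - 1) ^ 2 * s ^ 2 - 2 * v * (w * t + t - 2 * w) * s + t ^ 2 * v ^ 2) * r ^ 2 +
      2 * v * (s * t - 2 * w * s - t * (v * t - w * s)) * r + t ^ 2 * v ^ 2) * x ^ 2 +
    (-(2 * v * s) * (2 * (v - s) * r ^ 2 + (s - 2 * v - (v * t - w * s)) * r + v * t)) *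
      (x * y) +
    (s ^ 2 * v ^ 2) * y ^ 2 +
    (2 * s * v * r * (((v * t - w * s) - s) * r - (v * t - w * s) + s * w)) * x +
    (-(2 * s ^ 2 * v ^ 2 * r)) * y + s ^ 2 * v ^ 2 * r ^ 2

/-! ### Auxiliary machinery added for the proof -/

def KA (s t v w r : ℝ) : ℝ := ((w - 1) ^ 2 * s ^ 2 - 2 * v * (w * t + t - 2 * w) * s + t ^ 2 * v ^ 2) * r ^ 2 +
      2 * v * (s * t - 2 * w * s - t * (v * t - w * s)) * r + t ^ 2 * v ^ 2
def KB (s t v w r : ℝ) : ℝ := -(2 * v * s) * (2 * (v - s) * r ^ 2 + (s - 2 * v - (v * t - w * s)) * r + v * t)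
def KC (s t v w r : ℝ) : ℝ := s ^ 2 * v ^ 2
def KD (s t v w r : ℝ) : ℝ := 2 * s * v * r * (((v * t - w * s) - s) * r - (v * t - w * s) + s * w)
def KE (s t v w r : ℝ) : ℝ := -(2 * s ^ 2 * v ^ 2 * r)
def KF (s t v w r : ℝ) : ℝ := s ^ 2 * v ^ 2 * r ^ 2

lemma psi_eq (s t v w r x y : ℝ) : psi s t v w r x y =
    KA s t v w r * x^2 + KB s t v w r * (x*y) + KC s t v w r * y^2 +
    KD s t v w r * x + KE s t v w r * y + KF s t v w r := rfl

lemma idI1 (s t v w r : ℝ) :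
    2*(2 * KC s t v w r * KD s t v w r - KB s t v w r * KE s t v w r) * ((s - v)*r + v)
    = s*v*((KB s t v w r)^2 - 4 * KA s t v w r * KC s t v w r) := by
  unfold KA KB KC KD KE; ring

lemma idI2 (s t v w r : ℝ) :
    2*(2 * KA s t v w r * KE s t v w r - KB s t v w r * KD s t v w r) * ((s - v)*r + v)
    = (v*t - (v*t - w*s - s)*r)*((KB s t v w r)^2 - 4 * KA s t v w r * KC s t v w r) := by
  unfold KA KB KC KD KE; ring

lemma idI3 (s t v w r : ℝ) :
    ((2 * KC s t v w r * KD s t v w r - KB s t v w r * KE s t v w r)^2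
      - (2 * KA s t v w r * KE s t v w r - KB s t v w r * KD s t v w r)^2
      + 4*(KA s t v w r - KC s t v w r) *
        (KA s t v w r * (KE s t v w r)^2 + KC s t v w r * (KD s t v w r)^2
          - KB s t v w r * KD s t v w r * KE s t v w r
          + KF s t v w r * ((KB s t v w r)^2 - 4 * KA s t v w r * KC s t v w r)))
      * ((s - v)*r + v)
    = -(r*s*w)*((KB s t v w r)^2 - 4 * KA s t v w r * KC s t v w r)^2 := by
  unfold KA KB KC KD KE KF; ring

lemma idI4 (s t v w r : ℝ) :
    (2*(2 * KC s t v w r * KD s t v w r - KB s t v w r * KE s t v w r)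
        * (2 * KA s t v w r * KE s t v w r - KB s t v w r * KD s t v w r)
      + 4*(KB s t v w r) *
        (KA s t v w r * (KE s t v w r)^2 + KC s t v w r * (KD s t v w r)^2
          - KB s t v w r * KD s t v w r * KE s t v w r
          + KF s t v w r * ((KB s t v w r)^2 - 4 * KA s t v w r * KC s t v w r)))
      * ((s - v)*r + v)
    = (r*s*v)*((KB s t v w r)^2 - 4 * KA s t v w r * KC s t v w r)^2 := by
  unfold KA KB KC KD KE KF; ring

lemma dist_formula (zz ff : ℂ) (R : ℝ) (hR : 0 ≤ R)
    (h : (zz.re - ff.re)^2 + (zz.im - ff.im)^2 = R^2) : dist zz ff = R := by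
  rw [Complex.dist_eq, Complex.norm_def, Complex.normSq_apply, Complex.sub_re, Complex.sub_im]
  rw [show (zz.re - ff.re) * (zz.re - ff.re) + (zz.im - ff.im) * (zz.im - ff.im) = R^2 by
    linear_combination h]
  exact Real.sqrt_sq hR

lemma conic_aux (A B C D E F c1 c2 p q al be : ℝ)
    (hm : 0 < p^2 + q^2) (hal : 0 < al) (hbe : 0 < be) (hbe2 : be^2 = al^2 - 1)
    (h1 : A*(c1+al*p)^2 + B*((c1+al*p)*(c2+al*q)) + C*(c2+al*q)^2 + D*(c1+al*p) + E*(c2+al*q) + F = 0)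
    (h2 : A*(c1-al*p)^2 + B*((c1-al*p)*(c2-al*q)) + C*(c2-al*q)^2 + D*(c1-al*p) + E*(c2-al*q) + F = 0)
    (h3 : A*(c1-be*q)^2 + B*((c1-be*q)*(c2+be*p)) + C*(c2+be*p)^2 + D*(c1-be*q) + E*(c2+be*p) + F = 0)
    (h4 : A*(c1+be*q)^2 + B*((c1+be*q)*(c2-be*p)) + C*(c2-be*p)^2 + D*(c1+be*q) + E*(c2-be*p) + F = 0)
    (h5 : A*(c1+(3/5)*al*p-(4/5)*be*q)^2 + B*((c1+(3/5)*al*p-(4/5)*be*q)*(c2+(3/5)*al*q+(4/5)*be*p))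
          + C*(c2+(3/5)*al*q+(4/5)*be*p)^2 + D*(c1+(3/5)*al*p-(4/5)*be*q) + E*(c2+(3/5)*al*q+(4/5)*be*p) + F = 0)
    (h6 : A*(c1-(3/5)*al*p+(4/5)*be*q)^2 + B*((c1-(3/5)*al*p+(4/5)*be*q)*(c2-(3/5)*al*q-(4/5)*be*p))
          + C*(c2-(3/5)*al*q-(4/5)*be*p)^2 + D*(c1-(3/5)*al*p+(4/5)*be*q) + E*(c2-(3/5)*al*q-(4/5)*be*p) + F = 0)
    (hnz : ¬(A = 0 ∧ B = 0 ∧ C = 0 ∧ D = 0 ∧ E = 0 ∧ F = 0)) :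
    2*A*c1 + B*c2 + D = 0 ∧ B*c1 + 2*C*c2 + E = 0 ∧
    (B^2 - 4*A*C ≠ 0) ∧
    (p^2-q^2)*(B^2-4*A*C) = -4*(A-C)*(A*c1^2 + B*(c1*c2) + C*c2^2 + D*c1 + E*c2 + F) ∧
    2*(p*q)*(B^2-4*A*C) = -4*B*(A*c1^2 + B*(c1*c2) + C*c2^2 + D*c1 + E*c2 + F) := by
  set F0 : ℝ := A*c1^2 + B*(c1*c2) + C*c2^2 + D*c1 + E*c2 + F with hF0
  have e1 : al*(p*(2*A*c1 + B*c2 + D) + q*(B*c1 + 2*C*c2 + E)) = 0 := by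
    linear_combination (1/2)*h1 - (1/2)*h2
  have e2 : be*(-q*(2*A*c1 + B*c2 + D) + p*(B*c1 + 2*C*c2 + E)) = 0 := by
    linear_combination (1/2)*h3 - (1/2)*h4
  have e1' : p*(2*A*c1 + B*c2 + D) + q*(B*c1 + 2*C*c2 + E) = 0 :=
    (mul_eq_zero.mp e1).resolve_left hal.ne'
  have e2' : -q*(2*A*c1 + B*c2 + D) + p*(B*c1 + 2*C*c2 + E) = 0 :=
    (mul_eq_zero.mp e2).resolve_left hbe.ne'
  have hL1 : 2*A*c1 + B*c2 + D = 0 := by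
    have h : (p^2+q^2) * (2*A*c1 + B*c2 + D) = 0 := by linear_combination p*e1' - q*e2'
    exact (mul_eq_zero.mp h).resolve_left hm.ne'
  have hL2 : B*c1 + 2*C*c2 + E = 0 := by
    have h : (p^2+q^2) * (B*c1 + 2*C*c2 + E) = 0 := by linear_combination q*e1' + p*e2'
    exact (mul_eq_zero.mp h).resolve_left hm.ne'
  have H1 : al^2*(A*p^2 + B*(p*q) + C*q^2) + F0 = 0 := by
    linear_combination (1/2)*h1 + (1/2)*h2
  have H2 : be^2*(A*q^2 - B*(p*q) + C*p^2) + F0 = 0 := by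
    linear_combination (1/2)*h3 + (1/2)*h4
  have H3' : al*be*(B*(p^2-q^2) - 2*(A-C)*(p*q)) = 0 := by
    linear_combination (25/24)*h5 + (25/24)*h6 - (3/4)*H1 - (4/3)*H2
  have H3 : B*(p^2-q^2) - 2*(A-C)*(p*q) = 0 :=
    (mul_eq_zero.mp H3').resolve_left (mul_pos hal hbe).ne'
  have hFA : al^2*be^2*(p^2+q^2)^2*A = -(F0*(al^2*(p^2+q^2) - p^2)) := by
    linear_combination (be^2*p^2)*H1 + (al^2*q^2)*H2 - (al^2*be^2*p*q)*H3 - (p^2*F0)*hbe2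
  have hFB : al^2*be^2*(p^2+q^2)^2*B = 2*F0*(p*q) := by
    linear_combination (2*be^2*p*q)*H1 - (2*al^2*p*q)*H2 + (al^2*be^2*(p^2-q^2))*H3 - (2*p*q*F0)*hbe2
  have hFC : al^2*be^2*(p^2+q^2)^2*C = -(F0*(al^2*(p^2+q^2) - q^2)) := by
    linear_combination (be^2*q^2)*H1 + (al^2*p^2)*H2 + (al^2*be^2*p*q)*H3 - (q^2*F0)*hbe2
  have hMpos : 0 < al^2*be^2*(p^2+q^2)^2 := by positivity
  have hF0ne : F0 ≠ 0 := by
    intro h0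
    have hA0 : A = 0 := by
      have h : al^2*be^2*(p^2+q^2)^2*A = 0 := by rw [hFA, h0]; ring
      exact (mul_eq_zero.mp h).resolve_left hMpos.ne'
    have hB0 : B = 0 := by
      have h : al^2*be^2*(p^2+q^2)^2*B = 0 := by rw [hFB, h0]; ring
      exact (mul_eq_zero.mp h).resolve_left hMpos.ne'
    have hC0 : C = 0 := by
      have h : al^2*be^2*(p^2+q^2)^2*C = 0 := by rw [hFC, h0]; ring
      exact (mul_eq_zero.mp h).resolve_left hMpos.ne'
    have hD0 : D = 0 := by linear_combination hL1 - 2*c1*hA0 - c2*hB0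
    have hE0 : E = 0 := by linear_combination hL2 - c1*hB0 - 2*c2*hC0
    have hFF0 : F = 0 := by
      linear_combination h0 - hF0 - c1^2*hA0 - (c1*c2)*hB0 - c2^2*hC0 - c1*hD0 - c2*hE0
    exact hnz ⟨hA0, hB0, hC0, hD0, hE0, hFF0⟩
  have key : (al^2*be^2*(p^2+q^2)^2) *
      ((al^2*be^2*(p^2+q^2)^2)*(B^2-4*A*C) + 4*F0^2) = 0 := by
    linear_combination (al^2*be^2*(p^2+q^2)^2*B + 2*F0*(p*q))*hFB
      - 4*(al^2*be^2*(p^2+q^2)^2)*C*hFA + 4*F0*(al^2*(p^2+q^2)-p^2)*hFC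
      + (4*al^2*F0^2*(p^2+q^2)^2)*hbe2
  have hMD : (al^2*be^2*(p^2+q^2)^2)*(B^2-4*A*C) = -(4*F0^2) := by
    have h := (mul_eq_zero.mp key).resolve_left hMpos.ne'
    linarith
  have hDne : B^2 - 4*A*C ≠ 0 := by
    intro h
    rw [h, mul_zero] at hMD
    have : F0^2 > 0 := by positivity
    linarith
  have hAC : al^2*be^2*(p^2+q^2)^2*(A-C) = F0*(p^2-q^2) := by
    linear_combination hFA - hFC
  have hP' : F0*((p^2-q^2)*(B^2-4*A*C) + 4*(A-C)*F0) = 0 := by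
    linear_combination (-(B^2-4*A*C))*hAC + (A-C)*hMD
  have hQ' : F0*(2*(p*q)*(B^2-4*A*C) + 4*B*F0) = 0 := by
    linear_combination (-(B^2-4*A*C))*hFB + B*hMD
  refine ⟨hL1, hL2, hDne, ?_, ?_⟩
  · have h := (mul_eq_zero.mp hP').resolve_left hF0ne; linarith
  · have h := (mul_eq_zero.mp hQ').resolve_left hF0ne; linarith

set_option maxHeartbeats 2000000 in
/-- The foci of the non-circular inscribed ellipse of `Q_{s,t,v,w}` with
parameter `r ∈ (0,1)` are exactly the roots of
`p(z) = z² + ((−sv + ((N−s)r − vt)i)/τ)z + rs(−w + vi)/τ`,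
where `N = vt − ws` and `τ = (s−v)r + v`. -/
theorem Qstvw_foci_roots
    (s t v w r : ℝ) (hs : 0 < s) (ht : 0 < t) (hv : 0 < v) (hw : w ≤ t)
    (hconv : IsConvexQuad 0 Complex.I ((s : ℂ) + t * Complex.I) ((v : ℂ) + w * Complex.I))
    (hntrap : ¬ IsTrapezoid 0 Complex.I ((s : ℂ) + t * Complex.I) ((v : ℂ) + w * Complex.I))
    (hr : r ∈ Set.Ioo (0 : ℝ) 1)
    (E : Set ℂ) (f₁ f₂ : ℂ) (a : ℝ)
    (hE : IsEllipse E f₁ f₂ a) (hnc : f₁ ≠ f₂)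
    (hins : InscribedInQuad E 0 Complex.I ((s : ℂ) + t * Complex.I) ((v : ℂ) + w * Complex.I))
    (heq : E = {z : ℂ | psi s t v w r z.re z.im = 0}) :
    ∀ z : ℂ,
      z ^ 2 +
        ((-((s : ℂ) * v) + (((v : ℂ) * t - w * s - s) * r - v * t) * Complex.I) /
          (((s : ℂ) - v) * r + v)) * z +
        ((r : ℂ) * s * (-(w : ℂ) + v * Complex.I)) / (((s : ℂ) - v) * r + v) =
      (z - f₁) * (z - f₂) := by
  
  obtain ⟨hr0, hr1⟩ := hr
  obtain ⟨ha2, hEset⟩ := hE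
  set c1 := (f₁.re + f₂.re)/2 with hc1
  set c2 := (f₁.im + f₂.im)/2 with hc2
  set p := (f₂.re - f₁.re)/2 with hp
  set q := (f₂.im - f₁.im)/2 with hq
  have hre1 : f₁.re = c1 - p := by rw [hc1, hp]; ring
  have hre2 : f₂.re = c1 + p := by rw [hc1, hp]; ring
  have him1 : f₁.im = c2 - q := by rw [hc2, hq]; ring
  have him2 : f₂.im = c2 + q := by rw [hc2, hq]; ring
  have hpq : 0 < p^2 + q^2 := by
    by_contra h
    push_neg at h
    have hp0 : p = 0 := by nlinarith [sq_nonneg p, sq_nonneg q]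
    have hq0 : q = 0 := by nlinarith [sq_nonneg p, sq_nonneg q]
    apply hnc
    apply Complex.ext
    · rw [hre1, hre2, hp0]; ring
    · rw [him1, him2, hq0]; ring
  set mm := Real.sqrt (p^2+q^2) with hmdef
  have hmpos : 0 < mm := Real.sqrt_pos.mpr hpq
  have hm2 : mm^2 = p^2+q^2 := Real.sq_sqrt hpq.le
  have hdist12 : dist f₁ f₂ = 2*mm := by
    apply dist_formula _ _ _ (by positivity)
    rw [hre1, hre2, him1, him2]
    linear_combination (-4)*hm2
  have hma : mm < a := by rw [hdist12] at ha2; linarith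
  have hapos : 0 < a := hmpos.trans hma
  have hb2pos : 0 < a^2 - mm^2 := by nlinarith
  set b := Real.sqrt (a^2 - mm^2) with hbdef
  have hbpos : 0 < b := Real.sqrt_pos.mpr hb2pos
  have hb2 : b^2 = a^2 - mm^2 := Real.sq_sqrt hb2pos.le
  set al := a/mm with haldef
  set be := b/mm with hbedef
  have halm : al*mm = a := div_mul_cancel₀ a hmpos.ne'
  have hbem : be*mm = b := div_mul_cancel₀ b hmpos.ne'
  have hal1 : 1 < al := (one_lt_div hmpos).mpr hma
  have halpos : 0 < al := lt_trans one_pos hal1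
  have hbepos : 0 < be := div_pos hbpos hmpos
  have hbe2 : be^2 = al^2 - 1 := by
    have h : be^2*mm^2 = (al^2-1)*mm^2 := by
      linear_combination (be*mm + b)*hbem - (al*mm + a)*halm + hb2
    exact mul_right_cancel₀ (pow_ne_zero 2 hmpos.ne') h
  clear_value c1 c2 p q mm b al be
  have hge1 : (0:ℝ) ≤ al + 1 := by linarith
  have hge2 : (0:ℝ) ≤ al - 1 := by linarith
  have hge3 : (0:ℝ) ≤ al + 3/5 := by linarith
  have hge4 : (0:ℝ) ≤ al - 3/5 := by linarith
  have hmem : ∀ zz : ℂ, dist zz f₁ + dist zz f₂ = 2*a → psi s t v w r zz.re zz.im = 0 := by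
    intro zz hzz
    have hz : zz ∈ E := by rw [hEset]; exact hzz
    rw [heq] at hz; exact hz
  -- the six special points of the ellipse
  have P1 : psi s t v w r (c1+al*p) (c2+al*q) = 0 := by
    refine hmem ⟨c1+al*p, c2+al*q⟩ ?_
    have d1 : dist (⟨c1+al*p, c2+al*q⟩ : ℂ) f₁ = (al+1)*mm := by
      apply dist_formula _ _ _ (mul_nonneg hge1 hmpos.le)
      show ((c1+al*p) - f₁.re)^2 + ((c2+al*q) - f₁.im)^2 = ((al+1)*mm)^2
      rw [hre1, him1]; linear_combination (-((al+1)^2))*hm2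
    have d2 : dist (⟨c1+al*p, c2+al*q⟩ : ℂ) f₂ = (al-1)*mm := by
      apply dist_formula _ _ _ (mul_nonneg hge2 hmpos.le)
      show ((c1+al*p) - f₂.re)^2 + ((c2+al*q) - f₂.im)^2 = ((al-1)*mm)^2
      rw [hre2, him2]; linear_combination (-((al-1)^2))*hm2
    rw [d1, d2]; linear_combination 2*halm
  have P2 : psi s t v w r (c1-al*p) (c2-al*q) = 0 := by
    refine hmem ⟨c1-al*p, c2-al*q⟩ ?_
    have d1 : dist (⟨c1-al*p, c2-al*q⟩ : ℂ) f₁ = (al-1)*mm := by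
      apply dist_formula _ _ _ (mul_nonneg hge2 hmpos.le)
      show ((c1-al*p) - f₁.re)^2 + ((c2-al*q) - f₁.im)^2 = ((al-1)*mm)^2
      rw [hre1, him1]; linear_combination (-((al-1)^2))*hm2
    have d2 : dist (⟨c1-al*p, c2-al*q⟩ : ℂ) f₂ = (al+1)*mm := by
      apply dist_formula _ _ _ (mul_nonneg hge1 hmpos.le)
      show ((c1-al*p) - f₂.re)^2 + ((c2-al*q) - f₂.im)^2 = ((al+1)*mm)^2
      rw [hre2, him2]; linear_combination (-((al+1)^2))*hm2
    rw [d1, d2]; linear_combination 2*halm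
  have P3 : psi s t v w r (c1-be*q) (c2+be*p) = 0 := by
    refine hmem ⟨c1-be*q, c2+be*p⟩ ?_
    have d1 : dist (⟨c1-be*q, c2+be*p⟩ : ℂ) f₁ = al*mm := by
      apply dist_formula _ _ _ (mul_nonneg halpos.le hmpos.le)
      show ((c1-be*q) - f₁.re)^2 + ((c2+be*p) - f₁.im)^2 = (al*mm)^2
      rw [hre1, him1]; linear_combination (-(al^2))*hm2 + (p^2+q^2)*hbe2
    have d2 : dist (⟨c1-be*q, c2+be*p⟩ : ℂ) f₂ = al*mm := by
      apply dist_formula _ _ _ (mul_nonneg halpos.le hmpos.le)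
      show ((c1-be*q) - f₂.re)^2 + ((c2+be*p) - f₂.im)^2 = (al*mm)^2
      rw [hre2, him2]; linear_combination (-(al^2))*hm2 + (p^2+q^2)*hbe2
    rw [d1, d2]; linear_combination 2*halm
  have P4 : psi s t v w r (c1+be*q) (c2-be*p) = 0 := by
    refine hmem ⟨c1+be*q, c2-be*p⟩ ?_
    have d1 : dist (⟨c1+be*q, c2-be*p⟩ : ℂ) f₁ = al*mm := by
      apply dist_formula _ _ _ (mul_nonneg halpos.le hmpos.le)
      show ((c1+be*q) - f₁.re)^2 + ((c2-be*p) - f₁.im)^2 = (al*mm)^2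
      rw [hre1, him1]; linear_combination (-(al^2))*hm2 + (p^2+q^2)*hbe2
    have d2 : dist (⟨c1+be*q, c2-be*p⟩ : ℂ) f₂ = al*mm := by
      apply dist_formula _ _ _ (mul_nonneg halpos.le hmpos.le)
      show ((c1+be*q) - f₂.re)^2 + ((c2-be*p) - f₂.im)^2 = (al*mm)^2
      rw [hre2, him2]; linear_combination (-(al^2))*hm2 + (p^2+q^2)*hbe2
    rw [d1, d2]; linear_combination 2*halm
  have P5 : psi s t v w r (c1+(3/5)*al*p-(4/5)*be*q) (c2+(3/5)*al*q+(4/5)*be*p) = 0 := by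
    refine hmem ⟨c1+(3/5)*al*p-(4/5)*be*q, c2+(3/5)*al*q+(4/5)*be*p⟩ ?_
    have d1 : dist (⟨c1+(3/5)*al*p-(4/5)*be*q, c2+(3/5)*al*q+(4/5)*be*p⟩ : ℂ) f₁ = (al+3/5)*mm := by
      apply dist_formula _ _ _ (mul_nonneg hge3 hmpos.le)
      show ((c1+(3/5)*al*p-(4/5)*be*q) - f₁.re)^2 + ((c2+(3/5)*al*q+(4/5)*be*p) - f₁.im)^2 = ((al+3/5)*mm)^2
      rw [hre1, him1]; linear_combination (-((al+3/5)^2))*hm2 + (16/25)*(p^2+q^2)*hbe2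
    have d2 : dist (⟨c1+(3/5)*al*p-(4/5)*be*q, c2+(3/5)*al*q+(4/5)*be*p⟩ : ℂ) f₂ = (al-3/5)*mm := by
      apply dist_formula _ _ _ (mul_nonneg hge4 hmpos.le)
      show ((c1+(3/5)*al*p-(4/5)*be*q) - f₂.re)^2 + ((c2+(3/5)*al*q+(4/5)*be*p) - f₂.im)^2 = ((al-3/5)*mm)^2
      rw [hre2, him2]; linear_combination (-((al-3/5)^2))*hm2 + (16/25)*(p^2+q^2)*hbe2
    rw [d1, d2]; linear_combination 2*halm
  have P6 : psi s t v w r (c1-(3/5)*al*p+(4/5)*be*q) (c2-(3/5)*al*q-(4/5)*be*p) = 0 := by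
    refine hmem ⟨c1-(3/5)*al*p+(4/5)*be*q, c2-(3/5)*al*q-(4/5)*be*p⟩ ?_
    have d1 : dist (⟨c1-(3/5)*al*p+(4/5)*be*q, c2-(3/5)*al*q-(4/5)*be*p⟩ : ℂ) f₁ = (al-3/5)*mm := by
      apply dist_formula _ _ _ (mul_nonneg hge4 hmpos.le)
      show ((c1-(3/5)*al*p+(4/5)*be*q) - f₁.re)^2 + ((c2-(3/5)*al*q-(4/5)*be*p) - f₁.im)^2 = ((al-3/5)*mm)^2
      rw [hre1, him1]; linear_combination (-((al-3/5)^2))*hm2 + (16/25)*(p^2+q^2)*hbe2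
    have d2 : dist (⟨c1-(3/5)*al*p+(4/5)*be*q, c2-(3/5)*al*q-(4/5)*be*p⟩ : ℂ) f₂ = (al+3/5)*mm := by
      apply dist_formula _ _ _ (mul_nonneg hge3 hmpos.le)
      show ((c1-(3/5)*al*p+(4/5)*be*q) - f₂.re)^2 + ((c2-(3/5)*al*q-(4/5)*be*p) - f₂.im)^2 = ((al+3/5)*mm)^2
      rw [hre2, him2]; linear_combination (-((al+3/5)^2))*hm2 + (16/25)*(p^2+q^2)*hbe2
    rw [d1, d2]; linear_combination 2*halm
  rw [psi_eq] at P1 P2 P3 P4 P5 P6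
  -- nondegeneracy
  have hnz : ¬(KA s t v w r = 0 ∧ KB s t v w r = 0 ∧ KC s t v w r = 0 ∧
      KD s t v w r = 0 ∧ KE s t v w r = 0 ∧ KF s t v w r = 0) := by
    rintro ⟨hA0, hB0, hC0, hD0, hE0, hF0⟩
    have hcc : psi s t v w r c1 c2 = 0 := by
      rw [psi_eq, hA0, hB0, hC0, hD0, hE0, hF0]; ring
    have hz : (⟨c1, c2⟩ : ℂ) ∈ E := by rw [heq]; exact hcc
    rw [hEset] at hz
    have hz' : dist (⟨c1, c2⟩ : ℂ) f₁ + dist (⟨c1, c2⟩ : ℂ) f₂ = 2*a := hz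
    have d1 : dist (⟨c1, c2⟩ : ℂ) f₁ = mm := by
      apply dist_formula _ _ _ hmpos.le
      show (c1 - f₁.re)^2 + (c2 - f₁.im)^2 = mm^2
      rw [hre1, him1]; linear_combination -hm2
    have d2 : dist (⟨c1, c2⟩ : ℂ) f₂ = mm := by
      apply dist_formula _ _ _ hmpos.le
      show (c1 - f₂.re)^2 + (c2 - f₂.im)^2 = mm^2
      rw [hre2, him2]; linear_combination -hm2
    rw [d1, d2] at hz'
    exact absurd hz' (ne_of_lt (by rw [two_mul]; exact add_lt_add hma hma))
  obtain ⟨hL1, hL2, hDne, hPeq, hQeq⟩ :=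
    conic_aux (KA s t v w r) (KB s t v w r) (KC s t v w r) (KD s t v w r) (KE s t v w r)
      (KF s t v w r) c1 c2 p q al be hpq halpos hbepos hbe2 P1 P2 P3 P4 P5 P6 hnz
  set qA := KA s t v w r with hqA
  set qB := KB s t v w r with hqB
  set qC := KC s t v w r with hqC
  set qD := KD s t v w r with hqD
  set qE := KE s t v w r with hqE
  set qF := KF s t v w r with hqF
  clear_value qA qB qC qD qE qF
  have I1 := idI1 s t v w r
  have I2 := idI2 s t v w r
  have I3 := idI3 s t v w r
  have I4 := idI4 s t v w r
  rw [← hqA, ← hqB, ← hqC, ← hqD, ← hqE] at I1 I2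
  rw [← hqA, ← hqB, ← hqC, ← hqD, ← hqE, ← hqF] at I3 I4
  have hc1D : c1*(qB^2 - 4*qA*qC) = 2*qC*qD - qB*qE := by
    linear_combination (-(2*qC))*hL1 + qB*hL2
  have hc2D : c2*(qB^2 - 4*qA*qC) = 2*qA*qE - qB*qD := by
    linear_combination qB*hL1 - 2*qA*hL2
  have hF0D : (qA*c1^2 + qB*(c1*c2) + qC*c2^2 + qD*c1 + qE*c2 + qF)*(qB^2 - 4*qA*qC)
      = qA*qE^2 + qC*qD^2 - qB*qD*qE + qF*(qB^2 - 4*qA*qC) := by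
    linear_combination ((qB^2 - 4*qA*qC)*c1/2)*hL1 + ((qB^2 - 4*qA*qC)*c2/2)*hL2
      + (qD/2)*hc1D + (qE/2)*hc2D
  have R1 : 2*c1*((s-v)*r+v) = s*v := by
    have h : (2*c1*((s-v)*r+v) - s*v)*(qB^2 - 4*qA*qC) = 0 := by
      linear_combination 2*((s-v)*r+v)*hc1D + I1
    have := (mul_eq_zero.mp h).resolve_right hDne
    linear_combination this
  have R2 : 2*c2*((s-v)*r+v) = v*t - (v*t - w*s - s)*r := by
    have h : (2*c2*((s-v)*r+v) - (v*t - (v*t - w*s - s)*r))*(qB^2 - 4*qA*qC) = 0 := by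
      linear_combination 2*((s-v)*r+v)*hc2D + I2
    have := (mul_eq_zero.mp h).resolve_right hDne
    linear_combination this
  have R3 : (c1^2 - c2^2 - (p^2 - q^2))*((s-v)*r+v) = -(r*s*w) := by
    have h : ((c1^2 - c2^2 - (p^2 - q^2))*((s-v)*r+v) + r*s*w)*(qB^2 - 4*qA*qC)^2 = 0 := by
      linear_combination ((s-v)*r+v)*(c1*(qB^2 - 4*qA*qC) + (2*qC*qD - qB*qE))*hc1D
        - ((s-v)*r+v)*(c2*(qB^2 - 4*qA*qC) + (2*qA*qE - qB*qD))*hc2D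
        - ((s-v)*r+v)*(qB^2 - 4*qA*qC)*hPeq
        + 4*((s-v)*r+v)*(qA-qC)*hF0D + I3
    have := (mul_eq_zero.mp h).resolve_right (pow_ne_zero 2 hDne)
    linear_combination this
  have R4 : (2*c1*c2 - 2*(p*q))*((s-v)*r+v) = r*s*v := by
    have h : ((2*c1*c2 - 2*(p*q))*((s-v)*r+v) - r*s*v)*(qB^2 - 4*qA*qC)^2 = 0 := by
      linear_combination 2*((s-v)*r+v)*(2*qA*qE - qB*qD)*hc1D
        + 2*((s-v)*r+v)*c1*(qB^2 - 4*qA*qC)*hc2D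
        - ((s-v)*r+v)*(qB^2 - 4*qA*qC)*hQeq
        + 4*((s-v)*r+v)*qB*hF0D + I4
    have := (mul_eq_zero.mp h).resolve_right (pow_ne_zero 2 hDne)
    linear_combination this
  -- final complex computation
  have hτpos : 0 < (s-v)*r + v := by
    have h1 : 0 < s*r := mul_pos hs hr0
    have h2 : 0 < v*(1-r) := mul_pos hv (sub_pos.mpr hr1)
    have h3 : (s-v)*r + v = s*r + v*(1-r) := by ring
    rw [h3]; exact add_pos h1 h2
  have hdenc : (((s:ℂ) - v)*r + v) = ((( (s-v)*r + v : ℝ)) : ℂ) := by push_cast; ring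
  have hden : (((s:ℂ) - v)*r + v) ≠ 0 := by
    rw [hdenc]
    exact_mod_cast hτpos.ne'
  have hf1 : f₁ = ((c1 - p : ℝ) : ℂ) + ((c2 - q : ℝ) : ℂ)*Complex.I := by
    apply Complex.ext <;> simp [hre1, him1]
  have hf2 : f₂ = ((c1 + p : ℝ) : ℂ) + ((c2 + q : ℝ) : ℂ)*Complex.I := by
    apply Complex.ext <;> simp [hre2, him2]
  have h1 : (-((s : ℂ) * v) + (((v : ℂ) * t - w * s - s) * r - v * t) * Complex.I) /
      (((s : ℂ) - v) * r + v) = -(f₁ + f₂) := by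
    rw [div_eq_iff hden, hf1, hf2, hdenc]
    apply Complex.ext
    · simp
      linear_combination R1
    · simp
      linear_combination R2
  have h2 : ((r : ℂ) * s * (-(w : ℂ) + v * Complex.I)) / (((s : ℂ) - v) * r + v) = f₁ * f₂ := by
    rw [div_eq_iff hden, hf1, hf2, hdenc]
    apply Complex.ext
    · simp
      linear_combination -R3
    · simp
      linear_combination -R4
  intro z
  linear_combination z*h1 + h2
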